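/- arXiv:1503.00887 — 3 statements merged into one kernel-verified Lean document; each statement's English description precedes it below -/
import Mathlib

section
/- For every y ∈ H, the family i ↦ λ_i·⟨y, φ_i⟩·φ_i is summable in H, and f has Fréchet gradient at y equal to ∇f(y) = Σ_i λ_i·⟨y, φ_i⟩·φ_i. -/
/-! The weighted sum `q(x) = Σ (w_i / 2) ⟪x, φ_i⟫²` is a quadratic form whose polar form is
`⟪g(y), x⟫` with `g(y) = Σ w_i ⟪y, φ_i⟫ φ_i`, so `q(x) - q(y) - ⟪g(y), x - y⟫ = q(x - y)`.
For bounded weights Parseval gives `|q(h)| ≤ (C / 2) ‖h‖²`, which is `o(‖h‖)`; the series `g(y)`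
converges because its coefficients `w_i ⟪y, φ_i⟫` lie in `ℓ²`. -/

open RealInnerProductSpace

theorem hasFDerivAt_of_norm_sub_sub_le_mul_sq {E F : Type*} [NormedAddCommGroup E]
    [NormedSpace ℝ E] [NormedAddCommGroup F] [NormedSpace ℝ F] {f : E → F} {f' : E →L[ℝ] F}
    {x : E} (C : ℝ) (h : ∀ y, ‖f y - f x - f' (y - x)‖ ≤ C * ‖y - x‖ ^ 2) :
    HasFDerivAt f f' x := by
  refine .of_isLittleO <| (Asymptotics.IsBigO.of_bound C (.of_forall fun y => ?_)).trans_isLittleO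
    (Asymptotics.isLittleO_pow_sub_sub x one_lt_two)
  simpa using h y

theorem norm_mul_sq_le_of_abs_le {c C : ℝ} (h : |c| ≤ C) (a : ℝ) : ‖c * a ^ 2‖ ≤ C * a ^ 2 := by
  rw [norm_mul, Real.norm_eq_abs, norm_pow, Real.norm_eq_abs, sq_abs]
  exact mul_le_mul_of_nonneg_right h (sq_nonneg a)

theorem abs_half_le_half {c C : ℝ} (h : |c| ≤ C) : |c / 2| ≤ C / 2 := by
  rw [abs_div, abs_two]
  linarith

namespace HilbertBasis

variable {H : Type*} [NormedAddCommGroup H] [InnerProductSpace ℝ H] {ι : Type*}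
  (b : HilbertBasis ι ℝ H)

noncomputable def diagQuadForm (w : ι → ℝ) (x : H) : ℝ := ∑' i, w i / 2 * ⟪x, b i⟫ ^ 2

noncomputable def diagonal (w : ι → ℝ) (x : H) : H := ∑' i, w i • ⟪x, b i⟫ • b i

theorem hasSum_inner_sq (x : H) : HasSum (fun i => ⟪x, b i⟫ ^ 2) (‖x‖ ^ 2) := by
  rw [← real_inner_self_eq_norm_sq]
  refine (b.hasSum_inner_mul_inner x x).congr_fun fun i => ?_
  rw [real_inner_comm (b i) x, sq]

variable {w : ι → ℝ} {C : ℝ}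

theorem summable_mul_inner_sq (hw : ∀ i, |w i| ≤ C) (x : H) :
    Summable fun i => w i * ⟪x, b i⟫ ^ 2 :=
  ((b.hasSum_inner_sq x).summable.mul_left C).of_norm_bounded fun i =>
    norm_mul_sq_le_of_abs_le (hw i) _

theorem abs_tsum_mul_inner_sq_le (hw : ∀ i, |w i| ≤ C) (x : H) :
    |∑' i, w i * ⟪x, b i⟫ ^ 2| ≤ C * ‖x‖ ^ 2 :=
  Real.norm_eq_abs _ ▸ tsum_of_norm_bounded ((b.hasSum_inner_sq x).mul_left C) fun i =>
    norm_mul_sq_le_of_abs_le (hw i) _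

theorem memℓp_mul_inner (hw : ∀ i, |w i| ≤ C) (x : H) : Memℓp (fun i => w i * ⟪x, b i⟫) 2 :=
  ((lp.memℓp (b.repr x)).norm.const_mul C).mono fun i => by
    rw [b.repr_apply_apply, real_inner_comm, norm_mul, Real.norm_eq_abs]
    exact mul_le_mul_of_nonneg_right (hw i) (norm_nonneg _)

theorem hasSum_smul_inner_smul (hw : ∀ i, |w i| ≤ C) (x : H) :
    HasSum (fun i => w i • ⟪x, b i⟫ • b i) (b.diagonal w x) := by
  have h := b.hasSum_repr_symm ⟨_, memℓp_mul_inner b hw x⟩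
  simp only [← smul_smul] at h
  exact h.summable.hasSum

theorem hasSum_mul_inner_mul_inner (hw : ∀ i, |w i| ≤ C) (x z : H) :
    HasSum (fun i => w i * ⟪x, b i⟫ * ⟪z, b i⟫) ⟪b.diagonal w x, z⟫ := by
  rw [real_inner_comm]
  refine ((b.hasSum_smul_inner_smul hw x).mapL (innerSL ℝ z)).congr_fun fun i => ?_
  rw [innerSL_apply_apply, real_inner_smul_right, real_inner_smul_right]
  ring

theorem diagQuadForm_sub_sub_inner (hw : ∀ i, |w i| ≤ C) (x y : H) :
    b.diagQuadForm w x - b.diagQuadForm w y - ⟪b.diagonal w y, x - y⟫ =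
      b.diagQuadForm w (x - y) := by
  have hw2 (i : ι) : |w i / 2| ≤ C / 2 := abs_half_le_half (hw i)
  have h := ((b.summable_mul_inner_sq hw2 x).hasSum.sub (b.summable_mul_inner_sq hw2 y).hasSum).sub
    (b.hasSum_mul_inner_mul_inner hw y (x - y))
  refine (h.congr_fun fun i => ?_).tsum_eq.symm
  rw [inner_sub_left]
  ring

theorem abs_diagQuadForm_le (hw : ∀ i, |w i| ≤ C) (x : H) :
    |b.diagQuadForm w x| ≤ C / 2 * ‖x‖ ^ 2 :=
  b.abs_tsum_mul_inner_sq_le (fun i => abs_half_le_half (hw i)) x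

theorem hasGradientAt_diagQuadForm [CompleteSpace H] (hw : ∀ i, |w i| ≤ C) (y : H) :
    HasGradientAt (b.diagQuadForm w) (b.diagonal w y) y := by
  rw [hasGradientAt_iff_hasFDerivAt]
  refine hasFDerivAt_of_norm_sub_sub_le_mul_sq (C / 2) fun x => ?_
  rw [InnerProductSpace.toDual_apply_apply, b.diagQuadForm_sub_sub_inner hw, Real.norm_eq_abs]
  exact b.abs_diagQuadForm_le hw _

end HilbertBasis

theorem f_gradient_general {H : Type*} [NormedAddCommGroup H] [InnerProductSpace ℝ H]
    [CompleteSpace H] {ι : Type*} (φ : HilbertBasis ι ℝ H)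
    (σ β : ℝ) (lam : ι → ℝ)
    (hlam : ∀ i, σ ≤ lam i ∧ lam i ≤ β) (y : H) :
    Summable (fun i => lam i • (⟪y, φ i⟫ : ℝ) • φ i) ∧
    HasGradientAt (fun x : H => ∑' i, lam i / 2 * ⟪x, φ i⟫ ^ 2)
      (∑' i, lam i • (⟪y, φ i⟫ : ℝ) • φ i) y := by
  have hbdd : ∀ i, |lam i| ≤ max |σ| |β| := fun i => abs_le_max_abs_abs (hlam i).1 (hlam i).2
  exact ⟨(φ.hasSum_smul_inner_smul hbdd y).summable, φ.hasGradientAt_diagQuadForm hbdd y⟩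

/-- For every `y`, the family `i ↦ λ i • ⟪y, φ i⟫ • φ i` is summable in `H`, and
`f(x) = Σ_i (λ i / 2) ⟪x, φ i⟫²` has Fréchet gradient at `y` equal to
`∇f(y) = Σ_i λ i • ⟪y, φ i⟫ • φ i`. -/
theorem f_gradient {H : Type*} [NormedAddCommGroup H] [InnerProductSpace ℝ H]
    [CompleteSpace H] {ι : Type*} (φ : HilbertBasis ι ℝ H)
    (σ β : ℝ) (hσ : 0 < σ) (hσβ : σ ≤ β) (lam : ι → ℝ)
    (hlam : ∀ i, σ ≤ lam i ∧ lam i ≤ β) (y : H) :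
    Summable (fun i => lam i • (⟪y, φ i⟫ : ℝ) • φ i) ∧
    HasGradientAt (fun x : H => ∑' i, lam i / 2 * ⟪x, φ i⟫ ^ 2)
      (∑' i, lam i • (⟪y, φ i⟫ : ℝ) • φ i) y :=
  f_gradient_general φ σ β lam hlam y
end

section
/- For all real numbers σ, β, γ, α with 0 < σ ≤ β, 0 < γ ≤ 1/√(σβ), and 0 < α ≤ 1, the following hold: |1 - α + α·(1 - γβ)/(1 + γβ)| ≤ 1 - α + α·(1 - γσ)/(1 + γσ), and 1 - α + α·(1 - γσ)/(1 + γσ) = |1 - α| + α·max((1 - γσ)/(1 + γσ), (γβ - 1)/(1 + γβ)). -/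
/-! With `x = γσ ≤ y = γβ`, the step-size bound says exactly `x * y ≤ 1`. The contraction factor
`t ↦ (1 - t) / (1 + t)` is antitone and sends `t` to the negative of its value at `1 / t`, so
`x ≤ y ≤ 1 / x` gives `|(1 - y) / (1 + y)| ≤ (1 - x) / (1 + x)`; averaging with the identity
(weight `1 - α`) preserves this bound. -/

theorem sq_mul_le_one_of_le_one_div_sqrt {γ p : ℝ} (hγ : 0 ≤ γ) (h : γ ≤ 1 / √p) :
    γ ^ 2 * p ≤ 1 := by
  rcases le_or_gt p 0 with hp | hp
  · nlinarith [sq_nonneg γ]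
  · have hγp : γ * √p ≤ 1 := (le_div_iff₀ (Real.sqrt_pos.mpr hp)).mp h
    calc γ ^ 2 * p = (γ * √p) ^ 2 := by rw [mul_pow, Real.sq_sqrt hp.le]
      _ ≤ 1 := pow_le_one₀ (by positivity) hγp

theorem one_sub_div_one_add_le_of_le {x y : ℝ} (hx : -1 < x) (hxy : x ≤ y) :
    (1 - y) / (1 + y) ≤ (1 - x) / (1 + x) := by
  rw [div_le_div_iff₀ (by linarith) (by linarith)]
  nlinarith

theorem sub_one_div_one_add_le_of_mul_le_one {x y : ℝ} (hx : 0 ≤ x) (hy : 0 ≤ y)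
    (hxy : x * y ≤ 1) : (y - 1) / (1 + y) ≤ (1 - x) / (1 + x) := by
  rw [div_le_div_iff₀ (by linarith) (by linarith)]
  nlinarith

theorem abs_one_sub_div_one_add_le {x y : ℝ} (hx : 0 ≤ x) (hxy : x ≤ y) (hxy₁ : x * y ≤ 1) :
    |(1 - y) / (1 + y)| ≤ (1 - x) / (1 + x) := by
  have hneg : -((1 - y) / (1 + y)) = (y - 1) / (1 + y) := by rw [← neg_div, neg_sub]
  refine abs_le'.mpr ⟨one_sub_div_one_add_le_of_le (by linarith) hxy, ?_⟩
  rw [hneg]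
  exact sub_one_div_one_add_le_of_mul_le_one hx (hx.trans hxy) hxy₁

theorem abs_one_sub_add_mul_le {α a b : ℝ} (hα₀ : 0 ≤ α) (hα₁ : α ≤ 1) (hab : |a| ≤ b) :
    |1 - α + α * a| ≤ 1 - α + α * b :=
  calc |1 - α + α * a| ≤ |1 - α| + |α * a| := abs_add_le _ _
    _ = 1 - α + α * |a| := by
      rw [abs_mul, abs_of_nonneg hα₀, abs_of_nonneg (sub_nonneg.mpr hα₁)]
    _ ≤ 1 - α + α * b := by gcongr

/-- Case (ii): for `0 < σ ≤ β`, `0 < γ ≤ 1/√(σβ)` and `0 < α ≤ 1`,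
`|1 - α + α(1-γβ)/(1+γβ)| ≤ 1 - α + α(1-γσ)/(1+γσ)`, and the latter equals the rate bound
`|1-α| + α·max((1-γσ)/(1+γσ), (γβ-1)/(1+γβ))`. -/
theorem rate_case_ii (σ β γ α : ℝ) (hσ : 0 < σ) (hσβ : σ ≤ β)
    (hγ₀ : 0 < γ) (hγ₁ : γ ≤ 1 / Real.sqrt (σ * β)) (hα₀ : 0 < α) (hα₁ : α ≤ 1) :
    |1 - α + α * ((1 - γ * β) / (1 + γ * β))| ≤
      1 - α + α * ((1 - γ * σ) / (1 + γ * σ)) ∧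
    1 - α + α * ((1 - γ * σ) / (1 + γ * σ)) =
      |1 - α| + α * max ((1 - γ * σ) / (1 + γ * σ)) ((γ * β - 1) / (1 + γ * β)) := by
  have hx : 0 ≤ γ * σ := by positivity
  have hxy : γ * σ ≤ γ * β := mul_le_mul_of_nonneg_left hσβ hγ₀.le
  have hxy₁ : γ * σ * (γ * β) ≤ 1 := by
    have := sq_mul_le_one_of_le_one_div_sqrt hγ₀.le hγ₁
    linarith [show γ * σ * (γ * β) = γ ^ 2 * (σ * β) by ring]
  refine ⟨abs_one_sub_add_mul_le hα₀.le hα₁ (abs_one_sub_div_one_add_le hx hxy hxy₁), ?_⟩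
  rw [max_eq_left (sub_one_div_one_add_le_of_mul_le_one hx (hx.trans hxy) hxy₁),
    abs_of_nonneg (sub_nonneg.mpr hα₁)]
end

section
/- Let H and K be real Hilbert spaces, let f : H → ℝ be Fréchet differentiable with gradient ∇f and satisfy, for all x, y ∈ H, f(x) ≥ f(y) + ⟨∇f(y), x - y⟩ + (σ/2)·‖x - y‖² and f(x) ≤ f(y) + ⟨∇f(y), x - y⟩ + (β/2)·‖x - y‖² with 0 < σ ≤ β, and let A : H →L K be a bounded linear operator with adjoint A*. Then for every μ ∈ K the function x ↦ ⟨-A*(μ), x⟩ - f(x) attains its supremum at a unique point x_μ ∈ H, and the function d(μ) := ⟨-A*(μ), x_μ⟩ - f(x_μ) is (‖A*‖²/σ)-smooth in the sense that for all μ, η ∈ K: d(η) ≤ d(μ) + ⟨-A(x_μ), η - μ⟩ + (‖A*‖²/(2σ))·‖η - μ‖². -/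
/-!
The maximiser `x_μ` is the solution of `∇f x = -A* μ`. The gradient of a σ-strongly convex,
β-smooth function is σ-strongly monotone and (1/β)-cocoercive, so `x ↦ x - β⁻¹ (∇f x - b)` is a
contraction with constant `√(1 - σ/β)` and `∇f` is onto. Strong convexity at `x_μ` makes `x_μ`
the strict maximiser of `⟪b, x⟫ - f x` with a quadratic margin, and comparing the values at two
multipliers via this margin and `⟪v, u⟫ - σ/2 ‖u‖² ≤ ‖v‖²/(2σ)` gives the smoothness of `d`
with constant `‖A*‖²/σ`.
-/

open RealInnerProductSpace

section InnerProductSpace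

variable {H : Type*} [NormedAddCommGroup H] [InnerProductSpace ℝ H]

theorem inner_sub_half_mul_norm_sq_le {σ : ℝ} (hσ : 0 < σ) (v u : H) :
    ⟪v, u⟫ - σ / 2 * ‖u‖ ^ 2 ≤ ‖v‖ ^ 2 / (2 * σ) := by
  have h : 0 ≤ ‖v - σ • u‖ ^ 2 := sq_nonneg _
  rw [norm_sub_sq_real, real_inner_smul_right, norm_smul, mul_pow, Real.norm_eq_abs, sq_abs] at h
  rw [le_div_iff₀ (by positivity)]
  nlinarith

theorem norm_sub_inv_smul_sub_sq_le {g : H → H} {σ β : ℝ} (hβ : 0 < β)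
    (hmono : ∀ x y, σ * ‖x - y‖ ^ 2 ≤ ⟪g x - g y, x - y⟫)
    (hcoco : ∀ x y, ‖g x - g y‖ ^ 2 ≤ β * ⟪g x - g y, x - y⟫) (x y : H) :
    ‖(x - β⁻¹ • g x) - (y - β⁻¹ • g y)‖ ^ 2 ≤ (1 - σ / β) * ‖x - y‖ ^ 2 := by
  have hxy : (x - β⁻¹ • g x) - (y - β⁻¹ • g y) = (x - y) - β⁻¹ • (g x - g y) := by
    rw [smul_sub]; abel
  rw [hxy, norm_sub_sq_real, real_inner_smul_right, norm_smul, mul_pow, Real.norm_eq_abs, sq_abs,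
    real_inner_comm, div_eq_mul_inv]
  have hcoco' : β⁻¹ ^ 2 * ‖g x - g y‖ ^ 2 ≤ β⁻¹ * ⟪g x - g y, x - y⟫ := by
    calc β⁻¹ ^ 2 * ‖g x - g y‖ ^ 2 ≤ β⁻¹ ^ 2 * (β * ⟪g x - g y, x - y⟫) := by
          gcongr; exact hcoco x y
      _ = β⁻¹ * ⟪g x - g y, x - y⟫ := by field_simp
  have hmono' := mul_le_mul_of_nonneg_left (hmono x y) (inv_pos.mpr hβ).le
  linarith

theorem exists_apply_eq_zero_of_cocoercive [CompleteSpace H] {g : H → H} {σ β : ℝ}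
    (hσ : 0 < σ) (hσβ : σ ≤ β)
    (hmono : ∀ x y, σ * ‖x - y‖ ^ 2 ≤ ⟪g x - g y, x - y⟫)
    (hcoco : ∀ x y, ‖g x - g y‖ ^ 2 ≤ β * ⟪g x - g y, x - y⟫) :
    ∃ x, g x = 0 := by
  have hβ : 0 < β := hσ.trans_le hσβ
  have hc : 0 ≤ 1 - σ / β := sub_nonneg.mpr ((div_le_one hβ).mpr hσβ)
  have hc1 : √(1 - σ / β) < 1 := by
    rw [Real.sqrt_lt' one_pos]
    linarith [div_pos hσ hβ]
  have hcontr : ContractingWith ⟨√(1 - σ / β), Real.sqrt_nonneg _⟩ fun x => x - β⁻¹ • g x := by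
    refine ⟨hc1, LipschitzWith.of_dist_le_mul fun x y => ?_⟩
    change _ ≤ √(1 - σ / β) * _
    rw [dist_eq_norm, dist_eq_norm,
      ← pow_le_pow_iff_left₀ (norm_nonneg _) (by positivity) two_ne_zero, mul_pow,
      Real.sq_sqrt hc]
    exact norm_sub_inv_smul_sub_sq_le hβ hmono hcoco x y
  refine ⟨hcontr.fixedPoint _, ?_⟩
  have hfix := hcontr.fixedPoint_isFixedPt
  rw [Function.IsFixedPt, sub_eq_self, smul_eq_zero] at hfix
  exact hfix.resolve_left (inv_ne_zero hβ.ne')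

end InnerProductSpace

section Gradient

variable {H : Type*} [NormedAddCommGroup H] [InnerProductSpace ℝ H]
  {f : H → ℝ} {f' : H → H} {σ β : ℝ}

theorem strongMonotone_gradient
    (hstrong : ∀ x y : H, f x ≥ f y + ⟪f' y, x - y⟫ + σ / 2 * ‖x - y‖ ^ 2) (x y : H) : σ * ‖x - y‖ ^ 2 ≤ ⟪f' x - f' y, x - y⟫ := by
  have hxy := hstrong x y
  have hyx := hstrong y x
  rw [← neg_sub x y, inner_neg_right, norm_neg] at hyx
  rw [inner_sub_left]
  linarith

theorem add_inner_add_norm_gradient_sub_sq_le (hβ : 0 < β)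
    (hconv : ∀ x y : H, f x ≥ f y + ⟪f' y, x - y⟫)
    (hsmooth : ∀ x y : H, f x ≤ f y + ⟪f' y, x - y⟫ + β / 2 * ‖x - y‖ ^ 2) (x y : H) :
    f x + ⟪f' x, y - x⟫ + ‖f' y - f' x‖ ^ 2 / (2 * β) ≤ f y := by
  set w := f' y - f' x
  have hlower := hconv (y - β⁻¹ • w) x
  have hupper := hsmooth (y - β⁻¹ • w) y
  rw [show y - β⁻¹ • w - x = (y - x) - β⁻¹ • w by abel, inner_sub_right,
    real_inner_smul_right] at hlower
  rw [show y - β⁻¹ • w - y = -(β⁻¹ • w) by abel, inner_neg_right, real_inner_smul_right,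
    norm_neg, norm_smul, mul_pow, Real.norm_eq_abs, sq_abs] at hupper
  have hw : β⁻¹ * ⟪f' y, w⟫ - β⁻¹ * ⟪f' x, w⟫ = β⁻¹ * ‖w‖ ^ 2 := by
    rw [← mul_sub, ← inner_sub_left, real_inner_self_eq_norm_sq]
  have hβw : β / 2 * (β⁻¹ ^ 2 * ‖w‖ ^ 2) = ‖w‖ ^ 2 / (2 * β) := by field_simp
  have hβw' : β⁻¹ * ‖w‖ ^ 2 = ‖w‖ ^ 2 / (2 * β) + ‖w‖ ^ 2 / (2 * β) := by field_simp; ring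
  linarith

theorem cocoercive_gradient (hβ : 0 < β) (hconv : ∀ x y : H, f x ≥ f y + ⟪f' y, x - y⟫)
    (hsmooth : ∀ x y : H, f x ≤ f y + ⟪f' y, x - y⟫ + β / 2 * ‖x - y‖ ^ 2) (x y : H) :
    ‖f' x - f' y‖ ^ 2 ≤ β * ⟪f' x - f' y, x - y⟫ := by
  have hxy := add_inner_add_norm_gradient_sub_sq_le hβ hconv hsmooth x y
  have hyx := add_inner_add_norm_gradient_sub_sq_le hβ hconv hsmooth y x
  rw [← neg_sub x y, inner_neg_right, norm_sub_rev] at hxy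
  have hsum : ‖f' x - f' y‖ ^ 2 / β ≤ ⟪f' x - f' y, x - y⟫ := by
    rw [inner_sub_left]
    have : ‖f' x - f' y‖ ^ 2 / β = 2 * (‖f' x - f' y‖ ^ 2 / (2 * β)) := by field_simp
    linarith
  rwa [div_le_iff₀' hβ] at hsum

theorem exists_gradient_eq [CompleteSpace H] (hσ : 0 < σ) (hσβ : σ ≤ β)
    (hstrong : ∀ x y : H, f x ≥ f y + ⟪f' y, x - y⟫ + σ / 2 * ‖x - y‖ ^ 2)
    (hsmooth : ∀ x y : H, f x ≤ f y + ⟪f' y, x - y⟫ + β / 2 * ‖x - y‖ ^ 2) (b : H) :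
    ∃ x, f' x = b := by
  have hconv : ∀ x y : H, f x ≥ f y + ⟪f' y, x - y⟫ := fun x y => by
    nlinarith [hstrong x y, sq_nonneg ‖x - y‖]
  obtain ⟨x, hx⟩ := exists_apply_eq_zero_of_cocoercive (g := fun x => f' x - b) hσ hσβ
    (fun x y => by simpa only [sub_sub_sub_cancel_right] using strongMonotone_gradient hstrong x y)
    (fun x y => by
      simpa only [sub_sub_sub_cancel_right] using
        cocoercive_gradient (hσ.trans_le hσβ) hconv hsmooth x y)
  exact ⟨x, sub_eq_zero.mp hx⟩

theorem inner_sub_le_of_gradient_eq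
    (hstrong : ∀ x y : H, f x ≥ f y + ⟪f' y, x - y⟫ + σ / 2 * ‖x - y‖ ^ 2)
    {b x₀ : H} (hx₀ : f' x₀ = b) (x : H) :
    ⟪b, x⟫ - f x ≤ ⟪b, x₀⟫ - f x₀ - σ / 2 * ‖x - x₀‖ ^ 2 := by
  have h := hstrong x x₀
  rw [hx₀, inner_sub_right] at h
  linarith

theorem eq_of_inner_sub_le (hσ : 0 < σ)
    (hstrong : ∀ x y : H, f x ≥ f y + ⟪f' y, x - y⟫ + σ / 2 * ‖x - y‖ ^ 2)
    {b x₀ x : H} (hx₀ : f' x₀ = b) (hx : ∀ x', ⟪b, x'⟫ - f x' ≤ ⟪b, x⟫ - f x) : x = x₀ := by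
  have h := inner_sub_le_of_gradient_eq hstrong hx₀ x
  have hx₀' := hx x₀
  have hnorm : ‖x - x₀‖ ^ 2 ≤ 0 := by nlinarith
  rwa [sq_nonpos_iff, norm_eq_zero, sub_eq_zero] at hnorm

/-- Smoothness of the conjugate `f*` at `b₁ = ∇f x₁`, where `∇f* b₁ = x₁`. -/
theorem inner_sub_le_add_inner_add_norm_sq (hσ : 0 < σ)
    (hstrong : ∀ x y : H, f x ≥ f y + ⟪f' y, x - y⟫ + σ / 2 * ‖x - y‖ ^ 2)
    {b₁ x₁ : H} (hx₁ : f' x₁ = b₁) (b₂ x₂ : H) :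
    ⟪b₂, x₂⟫ - f x₂ ≤ ⟪b₁, x₁⟫ - f x₁ + ⟪b₂ - b₁, x₁⟫ + ‖b₂ - b₁‖ ^ 2 / (2 * σ) := by
  have hmax := inner_sub_le_of_gradient_eq hstrong hx₁ x₂
  have hquad := inner_sub_half_mul_norm_sq_le hσ (b₂ - b₁) (x₂ - x₁)
  have hsplit : ⟪b₂, x₂⟫ = ⟪b₁, x₂⟫ + ⟪b₂ - b₁, x₁⟫ + ⟪b₂ - b₁, x₂ - x₁⟫ := by
    simp only [inner_sub_left, inner_sub_right]; ring
  linarith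

end Gradient

theorem dual_smooth_general {H K : Type*}
    [NormedAddCommGroup H] [InnerProductSpace ℝ H] [CompleteSpace H]
    [NormedAddCommGroup K] [InnerProductSpace ℝ K] [CompleteSpace K]
    (σ β : ℝ) (hσ : 0 < σ) (hσβ : σ ≤ β)
    (f : H → ℝ) (f' : H → H)
    (hstrong : ∀ x y : H, f x ≥ f y + ⟪f' y, x - y⟫ + σ / 2 * ‖x - y‖ ^ 2)
    (hsmooth : ∀ x y : H, f x ≤ f y + ⟪f' y, x - y⟫ + β / 2 * ‖x - y‖ ^ 2)
    (A : H →L[ℝ] K) :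
    ∃ X : K → H,
      (∀ μ : K,
        (∀ x : H, ⟪-(A.adjoint μ), x⟫ - f x ≤ ⟪-(A.adjoint μ), X μ⟫ - f (X μ)) ∧
        (∀ x : H,
          (∀ x' : H, ⟪-(A.adjoint μ), x'⟫ - f x' ≤ ⟪-(A.adjoint μ), x⟫ - f x) → x = X μ)) ∧
      (∀ μ η : K,
        ⟪-(A.adjoint η), X η⟫ - f (X η) ≤
          (⟪-(A.adjoint μ), X μ⟫ - f (X μ)) + ⟪-(A (X μ)), η - μ⟫ +
            ‖A.adjoint‖ ^ 2 / (2 * σ) * ‖η - μ‖ ^ 2) := by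
  choose X hX using fun μ : K => exists_gradient_eq hσ hσβ hstrong hsmooth (-(A.adjoint μ))
  refine ⟨X, fun μ => ⟨fun x => ?_, fun x hx => eq_of_inner_sub_le hσ hstrong (hX μ) hx⟩,
    fun μ η => ?_⟩
  · exact (inner_sub_le_of_gradient_eq hstrong (hX μ) x).trans (sub_le_self _ (by positivity))
  have hdiff : -(A.adjoint η) - -(A.adjoint μ) = -(A.adjoint (η - μ)) := by
    rw [map_sub]; abel
  have hinner : ⟪-(A.adjoint (η - μ)), X μ⟫ = ⟪-(A (X μ)), η - μ⟫ := by
    rw [inner_neg_left, inner_neg_left, ContinuousLinearMap.adjoint_inner_left, real_inner_comm]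
  have hnorm : ‖A.adjoint (η - μ)‖ ^ 2 ≤ ‖A.adjoint‖ ^ 2 * ‖η - μ‖ ^ 2 := by
    rw [← mul_pow]
    exact pow_le_pow_left₀ (norm_nonneg _) (A.adjoint.le_opNorm _) 2
  have h := inner_sub_le_add_inner_add_norm_sq hσ hstrong (hX μ) (-(A.adjoint η)) (X η)
  rw [hdiff, hinner, norm_neg] at h
  have hbound : ‖A.adjoint (η - μ)‖ ^ 2 / (2 * σ) ≤ ‖A.adjoint‖ ^ 2 / (2 * σ) * ‖η - μ‖ ^ 2 := by
    rw [div_mul_eq_mul_div]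
    gcongr
  linarith

/-- If `f : H → ℝ` is σ-strongly convex and β-smooth (`0 < σ ≤ β`) with gradient `∇f`, and
`A : H →L K` is bounded linear with adjoint `A*`, then for every `μ` the function
`x ↦ ⟪-A* μ, x⟫ - f x` attains its supremum at a unique point `x_μ`, and the dual function
`d(μ) = ⟪-A* μ, x_μ⟫ - f x_μ` is `(‖A*‖²/σ)`-smooth:
`d η ≤ d μ + ⟪-A x_μ, η - μ⟫ + (‖A*‖²/(2σ)) ‖η - μ‖²`. -/
theorem dual_smooth {H K : Type*}
    [NormedAddCommGroup H] [InnerProductSpace ℝ H] [CompleteSpace H]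
    [NormedAddCommGroup K] [InnerProductSpace ℝ K] [CompleteSpace K]
    (σ β : ℝ) (hσ : 0 < σ) (hσβ : σ ≤ β)
    (f : H → ℝ) (f' : H → H) (hf : ∀ x, HasGradientAt f (f' x) x)
    (hstrong : ∀ x y : H, f x ≥ f y + ⟪f' y, x - y⟫ + σ / 2 * ‖x - y‖ ^ 2)
    (hsmooth : ∀ x y : H, f x ≤ f y + ⟪f' y, x - y⟫ + β / 2 * ‖x - y‖ ^ 2)
    (A : H →L[ℝ] K) :
    ∃ X : K → H,
      (∀ μ : K,
        (∀ x : H, ⟪-(A.adjoint μ), x⟫ - f x ≤ ⟪-(A.adjoint μ), X μ⟫ - f (X μ)) ∧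
        (∀ x : H,
          (∀ x' : H, ⟪-(A.adjoint μ), x'⟫ - f x' ≤ ⟪-(A.adjoint μ), x⟫ - f x) → x = X μ)) ∧
      (∀ μ η : K,
        ⟪-(A.adjoint η), X η⟫ - f (X η) ≤
          (⟪-(A.adjoint μ), X μ⟫ - f (X μ)) + ⟪-(A (X μ)), η - μ⟫ +
            ‖A.adjoint‖ ^ 2 / (2 * σ) * ‖η - μ‖ ^ 2) :=
  dual_smooth_general σ β hσ hσβ f f' hstrong hsmooth A
end
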